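/- arXiv:1302.2381 — 4 statements merged into one kernel-verified Lean document; each statement's English description precedes it below -/
import Mathlib

section
/- Let M be a finitely generated module over a discrete valuation ring O with M of finite cardinality. Then the cardinality of M equals the cardinality of O/Fit_O(M), where Fit_O(M) is the Fitting ideal of M. -/
/-!
By the Smith normal form, a square matrix `A` over a PID whose cokernel is finite has `det A`
associated to the product of its elementary divisors `a i`, and
`#coker A = ∏ #(O/(a i)) = #(O/(det A))`, because `#(O/(ab)) = #(O/(a)) · #(O/(b))` in any
domain. Hence every generator `det A` of `Fit_O(M)` satisfies `#(O/(det A)) = #M`. The ideals of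
a DVR are totally ordered, so a nonzero ideal is determined by the cardinality of its quotient:
all these generators span one principal ideal, which is therefore `Fit_O(M)`. Such a generator
exists because `M` is torsion (`O` is infinite), so the kernel of a surjection `O^n → M` is free
of rank `n`.
-/

/-- The zeroth Fitting ideal of an `O`-module `M`: the ideal generated by the
determinants of all square matrices `A` presenting `M`, i.e. such that
`M ≅ O^n / A·O^n`. -/
noncomputable def fittingIdeal (O : Type*) [CommRing O] (M : Type*) [AddCommGroup M]
    [Module O M] : Ideal O :=
  Ideal.span {d : O | ∃ (n : ℕ) (A : Matrix (Fin n) (Fin n) O), d = A.det ∧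
    Nonempty (M ≃ₗ[O] ((Fin n → O) ⧸ LinearMap.range A.mulVecLin))}

open Module Submodule

theorem LinearMap.det_eq_prod_of_apply_eq_smul {R M ι : Type*} [CommRing R] [AddCommGroup M]
    [Module R M] [Fintype ι] [DecidableEq ι] (b : Basis ι R M) (f : M →ₗ[R] M) (a : ι → R)
    (hf : ∀ i, f (b i) = a i • b i) : LinearMap.det f = ∏ i, a i := by
  rw [← LinearMap.det_toMatrix b, ← Matrix.det_diagonal]
  congr
  ext i j
  rcases eq_or_ne i j with rfl | hij
  · simp [LinearMap.toMatrix_apply, hf]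
  · simp [LinearMap.toMatrix_apply, hf, hij]

theorem Ideal.eq_of_card_quotient_eq {R : Type*} [CommRing R] [Nontrivial R]
    [PreValuationRing R] {I J : Ideal R} (h : Nat.card (R ⧸ I) = Nat.card (R ⧸ J))
    (h0 : Nat.card (R ⧸ I) ≠ 0) : I = J := by
  wlog hIJ : I ≤ J generalizing I J
  · exact (this h.symm (h ▸ h0) ((Std.Total.total I J).resolve_left hIJ)).symm
  refine hIJ.eq_of_not_lt fun hlt => ?_
  have : I.toAddSubgroup.FiniteIndex := ⟨h0⟩
  exact (AddSubgroup.index_strictAnti (toAddSubgroup_strictMono hlt)).ne h.symm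

section Domain

variable {R : Type*} [CommRing R] [IsDomain R]

theorem Module.isTorsion_of_finite [Infinite R] (M : Type*) [AddCommGroup M] [Module R M]
    [Finite M] : IsTorsion R M := by
  intro x
  obtain ⟨a, b, hab, h⟩ := Finite.exists_ne_map_eq_of_infinite (fun a : R => a • x)
  refine ⟨⟨a - b, mem_nonZeroDivisors_of_ne_zero (sub_ne_zero.mpr hab)⟩, ?_⟩
  simp only [Submonoid.smul_def, sub_smul, h, sub_self]

theorem Submodule.finrank_eq_of_isTorsion_quotient {M : Type*} [AddCommGroup M] [Module R M]
    [Module.Finite R M] {N : Submodule R M} (h : IsTorsion R (M ⧸ N)) :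
    finrank R N = finrank R M := by
  rw [← N.finrank_quotient_add_finrank, finrank_eq_zero_iff_isTorsion.mpr h, zero_add]

theorem Ideal.card_quotient_span_mul {a : R} (ha : a ≠ 0) (b : R) :
    Nat.card (R ⧸ Ideal.span {a * b}) =
      Nat.card (R ⧸ Ideal.span {a}) * Nat.card (R ⧸ Ideal.span {b}) := by
  -- multiplication by `a` induces `R ⧸ (b) ≃ (a) ⧸ (a * b)`
  let φ := (Ideal.span {a * b}).mkQ ∘ₗ LinearMap.toSpanSingleton R R a
  have hker : LinearMap.ker φ = Ideal.span {b} := by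
    ext x
    simp only [φ, LinearMap.mem_ker, LinearMap.comp_apply, mkQ_apply,
      LinearMap.toSpanSingleton_apply, Submodule.Quotient.mk_eq_zero, Ideal.mem_span_singleton,
      smul_eq_mul, mul_comm x a, mul_dvd_mul_iff_left ha]
  have hrange : LinearMap.range φ = Submodule.map (Ideal.span {a * b}).mkQ (Ideal.span {a}) := by
    rw [LinearMap.range_comp, ← LinearMap.span_singleton_eq_range]
  rw [← card_quotient_mul_card_quotient _ _
      (Ideal.span_singleton_le_span_singleton.mpr (dvd_mul_right a b)), mul_comm, ← hrange,
    ← hker, Nat.card_congr φ.quotKerEquivRange.toEquiv]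

theorem Ideal.card_quotient_span_prod {ι : Type*} (s : Finset ι) {a : ι → R}
    (ha : ∀ i ∈ s, a i ≠ 0) :
    Nat.card (R ⧸ Ideal.span {∏ i ∈ s, a i}) = ∏ i ∈ s, Nat.card (R ⧸ Ideal.span {a i}) := by
  induction s using Finset.cons_induction with
  | empty => simp
  | cons i s his ih =>
    rw [Finset.prod_cons, Finset.prod_cons,
      Ideal.card_quotient_span_mul (ha i (Finset.mem_cons_self i s)) _,
      ih fun j hj => ha j (Finset.mem_cons_of_mem hj)]

variable [IsPrincipalIdealRing R]

theorem LinearMap.card_quotient_range_eq_card_quotient_span_det {M : Type*} [AddCommGroup M]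
    [Module R M] [Module.Free R M] [Module.Finite R M] (f : M →ₗ[R] M)
    (hf : finrank R (range f) = finrank R M) :
    Nat.card (M ⧸ range f) = Nat.card (R ⧸ Ideal.span {LinearMap.det f}) := by
  classical
  set N := range f
  let b := Free.chooseBasis R M
  let a := smithNormalFormCoeffs b hf
  let e : M ≃ₗ[R] N :=
    (smithNormalFormTopBasis b hf).equiv (smithNormalFormBotBasis b hf) (.refl _)
  have hdiag : LinearMap.det (N.subtype ∘ₗ e.toLinearMap) = ∏ i, a i :=
    det_eq_prod_of_apply_eq_smul (smithNormalFormTopBasis b hf) _ a fun i => by simp [e, a]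
  have hbij : Function.Bijective f.rangeRestrict := by
    refine ⟨fun x y hxy => ?_, f.surjective_rangeRestrict⟩
    have : Function.Surjective (e.symm.toLinearMap ∘ₗ f.rangeRestrict) :=
      e.symm.surjective.comp f.surjective_rangeRestrict
    exact OrzechProperty.injective_of_surjective_endomorphism _ this (by simp [hxy])
  have hassoc : Associated (LinearMap.det f) (∏ i, a i) :=
    hdiag ▸ associated_det_comp_equiv N.subtype (.ofBijective _ hbij) e
  calc Nat.card (M ⧸ N) = ∏ i, Nat.card (R ⧸ Ideal.span {a i}) := by
        rw [Nat.card_congr (quotientEquivPiSpan N b hf).toEquiv, Nat.card_pi]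
    _ = Nat.card (R ⧸ Ideal.span {∏ i, a i}) :=
        (Ideal.card_quotient_span_prod _ fun i _ => smithNormalFormCoeffs_ne_zero b hf i).symm
    _ = Nat.card (R ⧸ Ideal.span {LinearMap.det f}) := by
        rw [Ideal.span_singleton_eq_span_singleton.mpr hassoc]

theorem Matrix.card_quotient_span_det [Infinite R] {ι : Type*} [Fintype ι] [DecidableEq ι]
    (A : Matrix ι ι R) [Finite ((ι → R) ⧸ LinearMap.range A.mulVecLin)] :
    Nat.card (R ⧸ Ideal.span {A.det}) = Nat.card ((ι → R) ⧸ LinearMap.range A.mulVecLin) := by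
  rw [← LinearMap.det_toLin', Matrix.toLin'_apply',
    LinearMap.card_quotient_range_eq_card_quotient_span_det]
  exact finrank_eq_of_isTorsion_quotient (isTorsion_of_finite _)

theorem Module.exists_square_presentation (M : Type*) [AddCommGroup M] [Module R M]
    [Module.Finite R M] (hM : IsTorsion R M) :
    ∃ (n : ℕ) (A : Matrix (Fin n) (Fin n) R),
      Nonempty (M ≃ₗ[R] (Fin n → R) ⧸ LinearMap.range A.mulVecLin) := by
  obtain ⟨n, π, hπ⟩ := Module.Finite.exists_fin' R M
  let eM := π.quotKerEquivOfSurjective hπ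
  have hK : finrank R (LinearMap.ker π) = n := by
    rw [finrank_eq_of_isTorsion_quotient, finrank_fin_fun]
    intro x
    obtain ⟨a, ha⟩ := @hM (eM x)
    refine ⟨a, eM.injective ?_⟩
    rw [Submonoid.smul_def, map_smul, ← Submonoid.smul_def, ha, map_zero]
  let bK := finBasisOfFinrankEq R _ hK
  let g := (LinearMap.ker π).subtype ∘ₗ bK.equivFun.symm.toLinearMap
  have hg : LinearMap.range g = LinearMap.ker π := by
    rw [LinearMap.range_comp, LinearEquiv.range, Submodule.map_top, Submodule.range_subtype]
  refine ⟨n, LinearMap.toMatrix' g, ⟨eM.symm.trans (quotEquivOfEq _ _ ?_)⟩⟩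
  rw [← Matrix.toLin'_apply', Matrix.toLin'_toMatrix', hg]

end Domain

theorem IsDiscreteValuationRing.infinite (R : Type*) [CommRing R] [IsDomain R]
    [IsDiscreteValuationRing R] : Infinite R :=
  not_finite_iff_infinite.mp fun _ => not_isField R (Finite.isField_of_domain R)

/-- If `M` is a finitely generated module of finite cardinality over a discrete
valuation ring `O`, then `#M = #(O / Fit_O(M))`. -/
theorem card_eq_card_quotient_fittingIdeal
    (O : Type*) [CommRing O] [IsDomain O] [IsDiscreteValuationRing O]
    (M : Type*) [AddCommGroup M] [Module O M] [Module.Finite O M] [Finite M] :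
    Nat.card M = Nat.card (O ⧸ fittingIdeal O M) := by
  have := IsDiscreteValuationRing.infinite O
  have hcard : ∀ {n : ℕ} (A : Matrix (Fin n) (Fin n) O),
      Nonempty (M ≃ₗ[O] (Fin n → O) ⧸ LinearMap.range A.mulVecLin) →
        Nat.card (O ⧸ Ideal.span {A.det}) = Nat.card M := fun A ⟨e⟩ => by
    have := Finite.of_equiv M e.toEquiv
    rw [A.card_quotient_span_det, Nat.card_congr e.toEquiv]
  obtain ⟨n, A, hA⟩ := exists_square_presentation M (isTorsion_of_finite (R := O) M)
  have hfit : fittingIdeal O M = Ideal.span {A.det} := by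
    refine le_antisymm (Ideal.span_le.mpr ?_) (Ideal.span_mono (by simpa using ⟨n, A, rfl, hA⟩))
    rintro _ ⟨m, B, rfl, hB⟩
    have hspan : Ideal.span {B.det} = Ideal.span {A.det} :=
      Ideal.eq_of_card_quotient_eq ((hcard B hB).trans (hcard A hA).symm)
        (by rw [hcard B hB]; exact Nat.card_pos.ne')
    exact hspan ▸ Ideal.mem_span_singleton_self _
  rw [hfit, hcard A hA]
end

section
/- Let O be a DVR, A = O^n with a product decomposition A = A_1 × ... × A_s where A_i = O^{n_i}, and let T ⊆ A be an O-subalgebra of full rank as an O-submodule. Let J ⊆ T be an ideal of finite index, and let T_i, J_i be the images of T, J under the projection A → A_i. Suppose α = (α_1,...,α_s) ∈ J is such that α_i generates J_i as an ideal of T_i for each i. Then #T/J ≤ #T/αT = ∏_{i=1}^s #T_i/α_i T_i. -/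
/-!
Since `O` is infinite and `Tᵢ ⧸ αᵢTᵢ` is a quotient of the finite ring `T ⧸ J`, some nonzero
constant of `O` is a multiple of `αᵢ`; hence every coordinate of `α` is nonzero and
multiplication by `α` is injective on `A`. If `J` is proper, `O ⧸ 𝔪` is finite (it is a quotient
of `O ⧸ (J ∩ O) ⊆ T ⧸ J`), so every `O ⧸ (c)` with `c ≠ 0` is finite and the full-rank lattices
`T ⊆ A` and `Tᵢ ⊆ Aᵢ` have finite index. Comparing `[A : αT]` in two ways then gives
`#T/αT = [A : αA] = ∏ᵢ [Aᵢ : αᵢAᵢ] = ∏ᵢ #Tᵢ/αᵢTᵢ`, and `αT ⊆ J` gives the inequality.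
If `J = T`, then every `αᵢ` is a unit and, `T` being local, so is `α`.
-/

/-- The projection `T →ₐ[O] A_i = O^{n_i}` obtained by composing the inclusion of the
subalgebra `T ⊆ A = ∏ i, O^{n_i}` with the canonical projection `φ_i : A → A_i`. -/
noncomputable def projAlgHom {O : Type*} [CommRing O] {s : ℕ} {n : Fin s → ℕ}
    (T : Subalgebra O (∀ i : Fin s, Fin (n i) → O)) (i : Fin s) :
    T →ₐ[O] (Fin (n i) → O) :=
  (Pi.evalAlgHom O (fun i => Fin (n i) → O) i).comp T.val

open IsLocalRing

theorem Ideal.exists_algebraMap_mem_of_finite_quotient {O R : Type*} [CommRing O] [Infinite O]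
    [CommRing R] [Algebra O R] (I : Ideal R) [Finite (R ⧸ I)] :
    ∃ d : O, d ≠ 0 ∧ algebraMap O R d ∈ I := by
  obtain ⟨x, y, hne, heq⟩ :=
    Finite.exists_ne_map_eq_of_infinite fun d : O => Ideal.Quotient.mk I (algebraMap O R d)
  exact ⟨x - y, sub_ne_zero.mpr hne, by rw [map_sub, ← Ideal.Quotient.eq]; exact heq⟩

theorem Ideal.finite_quotient_map_of_surjective {R S F : Type*} [CommRing R] [CommRing S]
    [FunLike F R S] [RingHomClass F R S] {f : F} (hf : Function.Surjective f) (I : Ideal R)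
    [Finite (R ⧸ I)] : Finite (S ⧸ I.map f) :=
  Finite.of_surjective _ (Ideal.quotientMap_surjective (f := (f : R →+* S))
    (H := Ideal.le_comap_map) hf)

theorem Subalgebra.isLeftRegular_of_finite_quotient_span {O ι : Type*} [CommRing O] [IsDomain O]
    [Infinite O] {B : Subalgebra O (ι → O)} (b : B) [Finite (B ⧸ Ideal.span {b})] :
    IsLeftRegular (b : ι → O) := by
  obtain ⟨d, hd, hdb⟩ := (Ideal.span {b}).exists_algebraMap_mem_of_finite_quotient (O := O)
  obtain ⟨c, hc⟩ := Ideal.mem_span_singleton'.mp hdb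
  have hreg : IsLeftRegular ((c : ι → O) * b) := by
    rw [← Subalgebra.coe_mul, hc, Subalgebra.coe_algebraMap]
    exact Pi.isLeftRegular_iff.mpr fun _ => (IsRegular.of_ne_zero hd).left
  exact hreg.of_mul

theorem IsLocalRing.finite_quotient_maximalIdeal_of_finite_quotient {O R : Type*} [CommRing O]
    [IsLocalRing O] [CommRing R] [Algebra O R] {J : Ideal R} (hJ : J ≠ ⊤) [Finite (R ⧸ J)] :
    Finite (O ⧸ maximalIdeal O) := by
  have hle : J.comap (algebraMap O R) ≤ maximalIdeal O :=
    le_maximalIdeal (Ideal.comap_ne_top _ hJ)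
  have : Finite (O ⧸ J.comap (algebraMap O R)) :=
    Finite.of_injective _ (Ideal.quotientMap_injective (I := J) (f := algebraMap O R))
  exact Finite.of_surjective _ (Ideal.Quotient.factor_surjective hle)

theorem IsDiscreteValuationRing.finite_quotient_span_singleton {O : Type*} [CommRing O]
    [IsDomain O] [IsDiscreteValuationRing O] [Finite (O ⧸ IsLocalRing.maximalIdeal O)] {c : O}
    (hc : c ≠ 0) : Finite (O ⧸ Ideal.span {c}) := by
  obtain ⟨ϖ, hϖ⟩ := exists_irreducible O
  obtain ⟨k, hk⟩ := ideal_eq_span_pow_irreducible (Ideal.span_singleton_eq_bot.not.mpr hc) hϖ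
  rw [hk, ← Ideal.span_singleton_pow, ← hϖ.maximalIdeal_eq]
  exact Ideal.finite_quotient_pow (IsNoetherian.noetherian _) k

theorem Submodule.finite_quotient_of_forall_exists_smul_mem {O M : Type*} [CommRing O]
    [IsDomain O] [AddCommGroup M] [Module O M] [Module.Finite O M]
    (hO : ∀ c : O, c ≠ 0 → Finite (O ⧸ Ideal.span {c})) {p : Submodule O M}
    (hp : ∀ m, ∃ c : O, c ≠ 0 ∧ c • m ∈ p) : Finite (M ⧸ p) := by
  have htors : Module.IsTorsion O (M ⧸ p) := by
    rintro ⟨m⟩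
    obtain ⟨c, hc, hcm⟩ := hp m
    exact ⟨⟨c, mem_nonZeroDivisors_of_ne_zero hc⟩, (Submodule.Quotient.mk_eq_zero p).mpr hcm⟩
  obtain ⟨c, hcann, hc⟩ := Submodule.annihilator_top_inter_nonZeroDivisors htors
  have := hO c (nonZeroDivisors.ne_zero hc)
  have : Finite (M ⧸ Ideal.span {c} • (⊤ : Submodule O M)) :=
    Submodule.finite_quotient_smul _ Module.Finite.fg_top
  have hle : Ideal.span {c} • (⊤ : Submodule O M) ≤ p := by
    rw [Submodule.smul_le]
    rintro r hr m -
    obtain ⟨a, rfl⟩ := Ideal.mem_span_singleton'.mp hr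
    rw [mul_comm, mul_smul, ← Submodule.Quotient.mk_eq_zero, Submodule.Quotient.mk_smul]
    exact Submodule.mem_annihilator.mp hcann _ Submodule.mem_top
  exact Finite.of_surjective _ (Submodule.factor_surjective hle)

theorem AddSubgroup.relIndex_map_eq_index_range {G : Type*} [AddGroup G] {φ : G →+ G}
    (hφ : Function.Injective φ) {H : AddSubgroup G} (hmap : H.map φ ≤ H) (hH : H.index ≠ 0) :
    (H.map φ).relIndex H = φ.range.index := by
  have h := AddSubgroup.relIndex_mul_index hmap
  rw [H.index_map_of_injective hφ, mul_comm H.index] at h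
  exact Nat.eq_of_mul_eq_mul_right (Nat.pos_of_ne_zero hH) h

theorem Subring.card_quotient_span_singleton_eq_relIndex {R : Type*} [CommRing R] (S : Subring R)
    (a : S) : Nat.card (S ⧸ Ideal.span {a}) =
      (S.toAddSubgroup.map (AddMonoidHom.mulLeft (a : R))).relIndex S.toAddSubgroup := by
  show (Ideal.span {a}).toAddSubgroup.index = _
  congr 1
  ext x
  change _ ↔ (x : R) ∈ S.toAddSubgroup.map _
  simp [Ideal.mem_span_singleton', Subtype.ext_iff, mul_comm]

theorem Subring.card_quotient_span_singleton {R : Type*} [CommRing R] (S : Subring R) (a : S)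
    (ha : IsLeftRegular (a : R)) [Finite (R ⧸ S.toAddSubgroup)] :
    Nat.card (S ⧸ Ideal.span {a}) = (AddMonoidHom.mulLeft (a : R)).range.index := by
  rw [S.card_quotient_span_singleton_eq_relIndex]
  refine AddSubgroup.relIndex_map_eq_index_range ha ?_ AddSubgroup.index_ne_zero_of_finite
  rintro _ ⟨x, hx, rfl⟩
  exact S.mul_mem a.2 hx

theorem AddSubgroup.index_pi_univ {ι : Type*} [Fintype ι] {G : ι → Type*} [∀ i, AddGroup (G i)]
    (H : ∀ i, AddSubgroup (G i)) : (AddSubgroup.pi Set.univ H).index = ∏ i, (H i).index := by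
  simp_rw [AddSubgroup.index, ← Nat.card_pi]
  refine Nat.card_congr
    ((Quotient.congrRight fun x y ↦ ?_).trans (Setoid.piQuotientEquiv _).symm)
  rw [QuotientAddGroup.leftRel_pi]

theorem AddMonoidHom.index_range_mulLeft_pi {ι : Type*} [Fintype ι] {R : ι → Type*}
    [∀ i, NonUnitalNonAssocRing (R i)] (a : ∀ i, R i) :
    (AddMonoidHom.mulLeft a).range.index = ∏ i, (AddMonoidHom.mulLeft (a i)).range.index := by
  rw [← AddSubgroup.index_pi_univ]
  congr 1
  ext x
  simp [AddSubgroup.mem_pi, funext_iff, Classical.skolem]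

theorem isUnit_of_forall_isUnit_projAlgHom {O : Type*} [CommRing O] {s : ℕ} {n : Fin s → ℕ}
    {T : Subalgebra O (∀ i : Fin s, Fin (n i) → O)} [IsLocalRing T] {a : T}
    (ha : ∀ i, IsUnit ((projAlgHom T i).rangeRestrict a)) : IsUnit a := by
  obtain ⟨i, hi⟩ := Function.ne_iff.mp fun h => one_ne_zero (Subtype.ext h : (1 : T) = 0)
  have : Nontrivial (projAlgHom T i).range := ⟨⟨1, 0, fun h => hi (congrArg Subtype.val h)⟩⟩
  let f : T →+* (projAlgHom T i).range := (projAlgHom T i).rangeRestrict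
  have := IsLocalHom.of_surjective f (projAlgHom T i).rangeRestrict_surjective
  exact IsUnit.of_map f a (ha i)

theorem exists_smul_mem_range_projAlgHom {O : Type*} [CommRing O] {s : ℕ} {n : Fin s → ℕ}
    {T : Subalgebra O (∀ i : Fin s, Fin (n i) → O)}
    (hfull : ∀ a : (∀ i : Fin s, Fin (n i) → O), ∃ c : O, c ≠ 0 ∧ c • a ∈ T) (i : Fin s)
    (x : Fin (n i) → O) : ∃ c : O, c ≠ 0 ∧ c • x ∈ (projAlgHom T i).range := by
  obtain ⟨c, hc, hcT⟩ := hfull (Pi.single i x)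
  exact ⟨c, hc, ⟨⟨_, hcT⟩, by simp [projAlgHom]⟩⟩

theorem card_quotient_span_eq_prod_of_isLeftRegular {O : Type*} [CommRing O] {s : ℕ}
    {n : Fin s → ℕ} (T : Subalgebra O (∀ i : Fin s, Fin (n i) → O))
    [Finite ((∀ i : Fin s, Fin (n i) → O) ⧸ T.toSubring.toAddSubgroup)]
    [∀ i, Finite ((Fin (n i) → O) ⧸ (projAlgHom T i).range.toSubring.toAddSubgroup)] (α : T)
    (hreg : ∀ i, IsLeftRegular ((projAlgHom T i).rangeRestrict α : Fin (n i) → O)) :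
    Nat.card (T ⧸ Ideal.span {α}) = ∏ i : Fin s, Nat.card
      ((projAlgHom T i).range ⧸ Ideal.span {(projAlgHom T i).rangeRestrict α}) :=
  calc Nat.card (T ⧸ Ideal.span {α})
      = (AddMonoidHom.mulLeft (α : ∀ i : Fin s, Fin (n i) → O)).range.index :=
        T.toSubring.card_quotient_span_singleton α (Pi.isLeftRegular_iff.mpr hreg)
    _ = ∏ i, (AddMonoidHom.mulLeft ((α : ∀ i : Fin s, Fin (n i) → O) i)).range.index :=
        AddMonoidHom.index_range_mulLeft_pi _
    _ = _ := Finset.prod_congr rfl fun i _ =>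
        ((projAlgHom T i).range.toSubring.card_quotient_span_singleton _ (hreg i)).symm

theorem card_quot_le_card_quot_span_eq_prod_general
    {O : Type*} [CommRing O] [IsDomain O] [IsDiscreteValuationRing O]
    {s : ℕ} {n : Fin s → ℕ}
    (T : Subalgebra O (∀ i : Fin s, Fin (n i) → O))
    [IsLocalRing T]
    (hfull : ∀ a : (∀ i : Fin s, Fin (n i) → O), ∃ c : O, c ≠ 0 ∧ c • a ∈ T)
    (J : Ideal T) [Finite (T ⧸ J)]
    (α : T) (hα : α ∈ J)
    (hgen : ∀ i : Fin s,
      Ideal.map (projAlgHom T i).rangeRestrict J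
        = Ideal.span {(projAlgHom T i).rangeRestrict α}) :
    Nat.card (T ⧸ J) ≤ Nat.card (T ⧸ Ideal.span {α}) ∧
    Nat.card (T ⧸ Ideal.span {α}) =
      ∏ i : Fin s, Nat.card
        ((projAlgHom T i).range ⧸ Ideal.span {(projAlgHom T i).rangeRestrict α}) := by
  have hfinite (i : Fin s) :
      Finite ((projAlgHom T i).range ⧸ Ideal.span {(projAlgHom T i).rangeRestrict α}) :=
    hgen i ▸ J.finite_quotient_map_of_surjective (projAlgHom T i).rangeRestrict_surjective
  suffices heq : Nat.card (T ⧸ Ideal.span {α}) = ∏ i : Fin s, Nat.card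
      ((projAlgHom T i).range ⧸ Ideal.span {(projAlgHom T i).rangeRestrict α}) by
    have : Finite (T ⧸ Ideal.span {α}) := Nat.finite_of_card_ne_zero
      (heq ▸ Finset.prod_ne_zero_iff.mpr fun i _ => Nat.card_pos.ne')
    exact ⟨Nat.card_le_card_of_surjective _
      (Ideal.Quotient.factor_surjective ((Ideal.span_singleton_le_iff_mem J).mpr hα)), heq⟩
  by_cases hJ : J = ⊤
  · have hunit : IsUnit α := isUnit_of_forall_isUnit_projAlgHom fun i =>
      Ideal.span_singleton_eq_top.mp (by rw [← hgen i, hJ, Ideal.map_top])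
    simp [Ideal.span_singleton_eq_top.mpr hunit, Ideal.span_singleton_eq_top.mpr (hunit.map _)]
  have : Infinite O := not_finite_iff_infinite.mp fun _ =>
    IsDiscreteValuationRing.not_isField O (Finite.isField_of_domain O)
  have := IsLocalRing.finite_quotient_maximalIdeal_of_finite_quotient (O := O) hJ
  have hO (c : O) (hc : c ≠ 0) : Finite (O ⧸ Ideal.span {c}) :=
    IsDiscreteValuationRing.finite_quotient_span_singleton hc
  have : Finite ((∀ i : Fin s, Fin (n i) → O) ⧸ T.toSubring.toAddSubgroup) :=
    Submodule.finite_quotient_of_forall_exists_smul_mem (p := Subalgebra.toSubmodule T) hO hfull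
  have (i : Fin s) :
      Finite ((Fin (n i) → O) ⧸ (projAlgHom T i).range.toSubring.toAddSubgroup) :=
    Submodule.finite_quotient_of_forall_exists_smul_mem
      (p := Subalgebra.toSubmodule (projAlgHom T i).range) hO
      (exists_smul_mem_range_projAlgHom hfull i)
  exact card_quotient_span_eq_prod_of_isLeftRegular T α fun i =>
    Subalgebra.isLeftRegular_of_finite_quotient_span _

/-- Lemma (principal lemma): with `O` a DVR, `A = ∏_{i=1}^s O^{n_i}`, `T ⊆ A` a local
complete `O`-subalgebra of full rank, `J ⊆ T` an ideal of finite index, `T_i = φ_i(T)`,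
`J_i = φ_i(J)`: if `α ∈ J` is such that each `α_i := φ_i(α)` generates `J_i` as an ideal
of `T_i`, then `#T/J ≤ #T/αT = ∏_{i=1}^s #T_i/α_i T_i`. -/
theorem card_quot_le_card_quot_span_eq_prod
    {O : Type*} [CommRing O] [IsDomain O] [IsDiscreteValuationRing O]
    {s : ℕ} {n : Fin s → ℕ} (hn : ∀ i, 0 < n i)
    (T : Subalgebra O (∀ i : Fin s, Fin (n i) → O))
    [IsLocalRing T] [IsAdicComplete (IsLocalRing.maximalIdeal T) T]
    (hfull : ∀ a : (∀ i : Fin s, Fin (n i) → O), ∃ c : O, c ≠ 0 ∧ c • a ∈ T)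
    (J : Ideal T) [Finite (T ⧸ J)]
    (α : T) (hα : α ∈ J)
    (hgen : ∀ i : Fin s,
      Ideal.map (projAlgHom T i).rangeRestrict J
        = Ideal.span {(projAlgHom T i).rangeRestrict α}) :
    Nat.card (T ⧸ J) ≤ Nat.card (T ⧸ Ideal.span {α}) ∧
    Nat.card (T ⧸ Ideal.span {α}) =
      ∏ i : Fin s, Nat.card
        ((projAlgHom T i).range ⧸ Ideal.span {(projAlgHom T i).rangeRestrict α}) :=
  card_quot_le_card_quot_span_eq_prod_general T hfull J α hα hgen
end

section
/- Let O be a DVR with residue field F, A = O^n = A_1 × ... × A_s, T ⊆ A a local complete O-subalgebra of full O-rank, J ⊆ T an ideal of finite index, and suppose #F^× ≥ s−1 and each J_i = φ_i(J) is principal in T_i = φ_i(T). Then there exists an element (α_1, ..., α_s) ∈ J such that α_i generates J_i as an ideal of T_i for every i. -/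
set_option synthInstance.maxHeartbeats 400000

lemma nonempty_fin_embedding_of_sub_one_le_card_units {K : Type*} [GroupWithZero K] {m : ℕ}
    (h : m - 1 ≤ Nat.card Kˣ) : Nonempty (Fin m ↪ K) := by
  rcases finite_or_infinite K with hK | hK
  · have := Fintype.ofFinite K
    apply Function.Embedding.nonempty_of_card_le
    rw [Fintype.card_fin, ← Nat.card_eq_fintype_card, Nat.card_eq_card_units_add_one]
    omega
  · exact ⟨Fin.valEmbedding.trans (Infinite.natEmbedding K)⟩

lemma IsLocalRing.exists_pairwise_isUnit_sub {R ι : Type*} [CommRing R] [IsLocalRing R]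
    (e : ι ↪ ResidueField R) : ∃ c : ι → R, Pairwise fun a b => IsUnit (c a - c b) := by
  choose c hc using fun a => residue_surjective (e a)
  refine ⟨c, fun a b hab => ?_⟩
  show IsUnit _
  rw [← residue_ne_zero_iff_isUnit, map_sub, hc, hc, sub_ne_zero]
  exact e.injective.ne hab

section Pencil

variable {R S ι : Type*} [CommRing R] [CommRing S]

/-- Over a local ring, when the differences `c a - c b` are units, these elements represent
distinct points of the projective line over the residue field. -/
def pencil (c : ι → R) (x y : R) : Option ι → R
  | none => y
  | some a => x + c a * y

lemma pencil_mem {I : Ideal R} (c : ι → R) {x y : R} (hx : x ∈ I) (hy : y ∈ I) :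
    ∀ o, pencil c x y o ∈ I
  | none => hy
  | some _ => I.add_mem hx (I.mul_mem_left _ hy)

lemma map_pencil (f : R →+* S) (c : ι → R) (x y : R) :
    ∀ o, f (pencil c x y o) = pencil (f ∘ c) (f x) (f y) o
  | none => rfl
  | some _ => by simp [pencil]

lemma pencil_mul_left (c : ι → R) (g x y : R) :
    ∀ o, pencil c (g * x) (g * y) o = g * pencil c x y o
  | none => rfl
  | some _ => by simp only [pencil]; ring

variable [IsLocalRing R]

lemma subsingleton_setOf_not_isUnit_pencil {c : ι → R}
    (hc : Pairwise fun a b => IsUnit (c a - c b)) {p q : R} (hpq : IsUnit p ∨ IsUnit q) :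
    {o | ¬IsUnit (pencil c p q o)}.Subsingleton := by
  simp only [← IsLocalRing.notMem_maximalIdeal, not_not] at hpq ⊢
  set m := IsLocalRing.maximalIdeal R
  have hq : ∀ a, p + c a * q ∈ m → q ∉ m := fun a ha hq =>
    hpq.elim (· (by simpa using m.sub_mem ha (m.mul_mem_left (c a) hq))) (· hq)
  rintro (_ | a) ha (_ | b) hb
  · rfl
  · exact (hq b hb ha).elim
  · exact (hq a ha hb).elim
  · by_contra hab
    refine hq a ha ((Ideal.unit_mul_mem_iff_mem m (hc fun h => hab (congrArg some h))).mp ?_)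
    have hdiff : (c a - c b) * q = (p + c a * q) - (p + c b * q) := by ring
    exact hdiff ▸ m.sub_mem ha hb

lemma subsingleton_setOf_ne_span_pencil {c : ι → R}
    (hc : Pairwise fun a b => IsUnit (c a - c b)) {I : Ideal R} {x y : R} (hx : x ∈ I)
    (hy : y ∈ I) (hxy : I = Ideal.span {x} ∨ I = Ideal.span {y}) :
    {o | I ≠ Ideal.span {pencil c x y o}}.Subsingleton := by
  obtain ⟨g, p, q, hpq, rfl, rfl, hI⟩ : ∃ g p q, (IsUnit p ∨ IsUnit q) ∧ x = g * p ∧ y = g * q ∧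
      I = Ideal.span {g} := by
    rcases hxy with hI | hI
    · obtain ⟨w, rfl⟩ := Ideal.mem_span_singleton'.mp (hI ▸ hy)
      exact ⟨x, 1, w, .inl isUnit_one, (mul_one x).symm, mul_comm w x, hI⟩
    · obtain ⟨t, rfl⟩ := Ideal.mem_span_singleton'.mp (hI ▸ hx)
      exact ⟨y, t, 1, .inr isUnit_one, mul_comm t y, (mul_one y).symm, hI⟩
  refine (subsingleton_setOf_not_isUnit_pencil hc hpq).anti fun o ho hu => ho ?_
  rw [pencil_mul_left, Ideal.span_singleton_mul_right_unit hu, hI]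

end Pencil

section Projections

variable {R ι κ : Type*} [CommRing R] {S : ι → Type*} [∀ i, CommRing (S i)]
  [∀ i, IsLocalRing (S i)] {J : Ideal R} {c : κ → R} [Fintype κ]

lemma exists_pencil_forall_map_eq_span (f : ∀ i, R →+* S i) (hc : Pairwise fun a b => IsUnit (c a - c b))
    {Q : Finset ι} (hQ : Q.card ≤ Fintype.card κ) {α β : R} (hα : α ∈ J) (hβ : β ∈ J)
    (hαβ : ∀ i ∈ Q, J.map (f i) = Ideal.span {f i α} ∨ J.map (f i) = Ideal.span {f i β}) :
    ∃ o, ∀ i ∈ Q, J.map (f i) = Ideal.span {f i (pencil c α β o)} := by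
  by_contra! hbad
  simp only [map_pencil] at hbad
  choose bad hbadQ hbad using hbad
  have hinj : Function.Injective bad := fun o o' h =>
    subsingleton_setOf_ne_span_pencil
      (hc.mono fun a b hab => by simpa using hab.map (f (bad o)))
      (J.mem_map_of_mem _ hα) (J.mem_map_of_mem _ hβ) (hαβ _ (hbadQ o)) (hbad o) (h ▸ hbad o')
  have := Finset.card_le_card_of_injOn (s := .univ) bad (fun o _ => hbadQ o) hinj.injOn
  simp only [Finset.card_univ, Fintype.card_option] at this
  omega

lemma exists_mem_forall_map_eq_span (f : ∀ i, R →+* S i) (hf : ∀ i, Function.Surjective (f i))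
    (hprin : ∀ i, (J.map (f i)).IsPrincipal) (hc : Pairwise fun a b => IsUnit (c a - c b))
    (Q : Finset ι) (hQ : Q.card ≤ Fintype.card κ) :
    ∃ α ∈ J, ∀ i ∈ Q, J.map (f i) = Ideal.span {f i α} := by
  classical
  induction Q using Finset.induction_on with
  | empty => exact ⟨0, J.zero_mem, by simp⟩
  | insert k P _ ih =>
    obtain ⟨α, hαJ, hα⟩ := ih ((Finset.card_le_card (Finset.subset_insert k P)).trans hQ)
    obtain ⟨g, hg⟩ := (hprin k).principal
    rw [Ideal.submodule_span_eq] at hg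
    obtain ⟨β, hβJ, rfl⟩ := (Ideal.mem_map_iff_of_surjective _ (hf k)).mp
      (hg ▸ Ideal.mem_span_singleton_self g)
    obtain ⟨o, ho⟩ := exists_pencil_forall_map_eq_span f hc hQ
      hαJ hβJ (by simpa [hg] using fun i hi => .inl (hα i hi))
    exact ⟨_, pencil_mem c hαJ hβJ o, ho⟩

end Projections

theorem exists_mem_generating_all_projections_general
    {O : Type*} [CommRing O] [IsDomain O] [IsDiscreteValuationRing O]
    {s : ℕ} {n : Fin s → ℕ} (hn : ∀ i, 0 < n i)
    (T : Subalgebra O (∀ i : Fin s, Fin (n i) → O))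
    [IsLocalRing T]
    (J : Ideal T)
    (hres : s - 1 ≤ Nat.card (IsLocalRing.ResidueField O)ˣ)
    (hprin : ∀ i : Fin s, (Ideal.map (projAlgHom T i).rangeRestrict J).IsPrincipal) :
    ∃ α ∈ J, ∀ i : Fin s,
      Ideal.map (projAlgHom T i).rangeRestrict J
        = Ideal.span {(projAlgHom T i).rangeRestrict α} := by
  have (i : Fin s) : IsLocalRing (projAlgHom T i).range :=
    have : NeZero (n i) := ⟨(hn i).ne'⟩
    .of_surjective' (projAlgHom T i).rangeRestrict.toRingHom
      (projAlgHom T i).rangeRestrict_surjective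
  obtain ⟨e⟩ := nonempty_fin_embedding_of_sub_one_le_card_units hres
  obtain ⟨c, hc⟩ := IsLocalRing.exists_pairwise_isUnit_sub e
  obtain ⟨α, hαJ, hα⟩ := exists_mem_forall_map_eq_span
    (fun i => (projAlgHom T i).rangeRestrict.toRingHom)
    (fun i => (projAlgHom T i).rangeRestrict_surjective) hprin
    (c := algebraMap O T ∘ c) (hc.mono fun a b hab => by simpa using hab.map (algebraMap O T))
    .univ (by simp)
  exact ⟨α, hαJ, fun i => hα i (Finset.mem_univ i)⟩

/-- Proposition: with `O` a DVR with residue field `F`, `A = ∏_{i=1}^s O^{n_i}`, `T ⊆ A`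
a local complete `O`-subalgebra of full rank, `J ⊆ T` an ideal of finite index, if
`#F^× ≥ s - 1` and each `J_i = φ_i(J)` is principal in `T_i = φ_i(T)`, then there is an
element `α = (α_1, …, α_s) ∈ J` such that `α_i` generates `J_i` for every `i`. -/
theorem exists_mem_generating_all_projections
    {O : Type*} [CommRing O] [IsDomain O] [IsDiscreteValuationRing O]
    {s : ℕ} {n : Fin s → ℕ} (hn : ∀ i, 0 < n i)
    (T : Subalgebra O (∀ i : Fin s, Fin (n i) → O))
    [IsLocalRing T] [IsAdicComplete (IsLocalRing.maximalIdeal T) T]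
    (hfull : ∀ a : (∀ i : Fin s, Fin (n i) → O), ∃ c : O, c ≠ 0 ∧ c • a ∈ T)
    (J : Ideal T) [Finite (T ⧸ J)]
    (hres : s - 1 ≤ Nat.card (IsLocalRing.ResidueField O)ˣ)
    (hprin : ∀ i : Fin s, (Ideal.map (projAlgHom T i).rangeRestrict J).IsPrincipal) :
    ∃ α ∈ J, ∀ i : Fin s,
      Ideal.map (projAlgHom T i).rangeRestrict J
        = Ideal.span {(projAlgHom T i).rangeRestrict α} :=
  exists_mem_generating_all_projections_general hn T J hres hprin
end

section
/- Let O be a DVR and T ⊆ O^n a full-rank O-subalgebra with an ideal J of finite index such that O → T/J is surjective. Write the coordinate projections as λ_1, ..., λ_n and let m be the unique maximal ideal of T containing J. Then exactly those λ_i which factor through the localization T_m (equivalently, with λ_i(m) contained in the maximal ideal of O) can have λ_i(J) ≠ O; for all other λ_i, the image λ_i(J) equals O, i.e., the congruence depth m_{λ_i} at those coordinates is 0. -/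
/-!
The coordinate projection `λᵢ : T → O` is surjective, since `T` contains the constants.
If `λᵢ(J)` is proper, it lies in the maximal ideal `𝔪_O`, so `J` lies in the maximal ideal
`λᵢ⁻¹(𝔪_O)` of `T`; by uniqueness this ideal is `m`, whence `λᵢ(m) = 𝔪_O`.
-/

theorem AlgHom.surjective_of_codomain_eq_base {R A : Type*} [CommSemiring R] [Semiring A]
    [Algebra R A] (f : A →ₐ[R] R) : Function.Surjective f :=
  fun c => ⟨algebraMap R A c, f.commutes c⟩

theorem Ideal.map_le_maximalIdeal_of_map_ne_top {R S : Type*} [CommRing R] [CommRing S]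
    [IsLocalRing S] {f : R →+* S} (hf : Function.Surjective f) {J m : Ideal R}
    (huniq : ∀ m' : Ideal R, m'.IsMaximal → J ≤ m' → m' = m) (hJ : J.map f ≠ ⊤) :
    m.map f ≤ IsLocalRing.maximalIdeal S := by
  have hmax : (IsLocalRing.maximalIdeal S).comap f = m :=
    huniq _ (Ideal.comap_isMaximal_of_surjective f hf)
      (Ideal.map_le_iff_le_comap.mp (IsLocalRing.le_maximalIdeal hJ))
  exact Ideal.map_le_iff_le_comap.mpr hmax.ge

theorem map_eq_top_of_not_factor_general
    {O : Type*} [CommRing O] [IsDomain O] [IsDiscreteValuationRing O]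
    {n : ℕ} (T : Subalgebra O (Fin n → O))
    (J : Ideal T)
    (m : Ideal T)
    (huniq : ∀ m' : Ideal T, m'.IsMaximal → J ≤ m' → m' = m) :
    ∀ i : Fin n,
      ¬ (Ideal.map ((Pi.evalAlgHom O (fun _ : Fin n => O) i).comp T.val) m
          ≤ IsLocalRing.maximalIdeal O) →
      Ideal.map ((Pi.evalAlgHom O (fun _ : Fin n => O) i).comp T.val) J = ⊤ := by
  intro i hfactor
  by_contra hJ
  exact hfactor <| Ideal.map_le_maximalIdeal_of_map_ne_top
    (f := (((Pi.evalAlgHom O (fun _ : Fin n => O) i).comp T.val : T →ₐ[O] O) : T →+* O))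
    (AlgHom.surjective_of_codomain_eq_base _) huniq hJ

/-- Let `O` be a DVR, `T ⊆ O^n` a full-rank `O`-subalgebra, `J ⊆ T` an ideal of finite
index with `O → T/J` surjective, and `m` the unique maximal ideal of `T` containing `J`.
Then only those coordinate projections `λᵢ` which factor through the localization `T_m`
(i.e. with `λᵢ(m)` contained in the maximal ideal of `O`) can have `λᵢ(J) ≠ O`; for every
other `λᵢ` one has `λᵢ(J) = O`, i.e. the congruence depth at those coordinates is `0`. -/
theorem map_eq_top_of_not_factor
    {O : Type*} [CommRing O] [IsDomain O] [IsDiscreteValuationRing O]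
    {n : ℕ} (T : Subalgebra O (Fin n → O))
    (hfull : ∀ a : Fin n → O, ∃ c : O, c ≠ 0 ∧ c • a ∈ T)
    (J : Ideal T) [Finite (T ⧸ J)]
    (hsurj : Function.Surjective (algebraMap O (T ⧸ J)))
    (m : Ideal T) (hm : m.IsMaximal) (hJm : J ≤ m)
    (huniq : ∀ m' : Ideal T, m'.IsMaximal → J ≤ m' → m' = m) :
    ∀ i : Fin n,
      ¬ (Ideal.map ((Pi.evalAlgHom O (fun _ : Fin n => O) i).comp T.val) m
          ≤ IsLocalRing.maximalIdeal O) →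
      Ideal.map ((Pi.evalAlgHom O (fun _ : Fin n => O) i).comp T.val) J = ⊤ :=
  map_eq_top_of_not_factor_general T J m huniq
end
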